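/- For every integer constant c > 1 there exist a constant C > 0, an oracle A assigning to every feasible port-numbered graph a binary advice string, and a function f, such that for every feasible port-numbered graph G of diameter D and election index φ: the advice length |A(G)| is at most C·(1 + log(1 + log(1 + log φ))), and the assignment v ↦ f(A(G), B^{D+φ^c}(v)) is a leader election output for G. That is, leader election in time at most D + φ^c can be achieved with O(log log log φ) bits of advice. -/

import Mathlib

/-! The advice is the least `a` with `φ ≤ towerDepth a`, where `towerDepth (m + 2) = 2 ^ 2 ^ m`:
it has `O(log log log φ)` bits, and `α := towerDepth a` satisfies `φ ≤ α ≤ φ ^ 2`, so the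
`α`-views of the nodes are pairwise distinct. A node whose view has depth `D + φ ^ c ≥ D + α`
sees, along shortest walks, the `α`-view of every node as the `α`-truncation of a subview at
depth at most `D`. All nodes therefore see the same set of `α`-views, and they all pick the same
element of it, the `α`-view of some node `w`. Each node `v` outputs a shortest port sequence
that leads in its view to a subview with that `α`-truncation; it codes a walk to `w` of length
`dist v w`, hence a simple path. -/

namespace Election

/-- A port-numbered graph: a simple undirected connected graph on `n ≥ 3` unlabeled nodes
(vertex set `Fin n`) in which, at each node `v` of degree `d`, the edges incident to `v`
carry distinct port numbers `0, …, d-1` at `v`. `portNum v u` is the port number at `v`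
of the edge `{v, u}` (meaningful only when `v` and `u` are adjacent). -/
structure PortGraph where
  n : ℕ
  three_le : 3 ≤ n
  G : SimpleGraph (Fin n)
  conn : G.Connected
  portNum : Fin n → Fin n → ℕ
  port_lt : ∀ v u : Fin n, G.Adj v u → portNum v u < Nat.card {w : Fin n // G.Adj v w}
  port_inj : ∀ v u w : Fin n, G.Adj v u → G.Adj v w → portNum v u = portNum v w → u = w

namespace PortGraph

/-- The degree of a node. -/
noncomputable def degree (PG : PortGraph) (v : Fin PG.n) : ℕ :=
  Nat.card {w : Fin PG.n // PG.G.Adj v w}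

open Classical in
/-- The neighbor of `v` reached through port `p` (junk value `v` if there is none). -/
noncomputable def nbr (PG : PortGraph) (v : Fin PG.n) (p : ℕ) : Fin PG.n :=
  if h : ∃ u : Fin PG.n, PG.G.Adj v u ∧ PG.portNum v u = p then h.choose else v

/-- Abstract (augmented truncated) views: a view at depth `0` is a leaf carrying a degree;
a view at depth `ℓ+1` is a node whose children are listed in the order of the port numbers
`0, …, d-1` at the root, each child carrying the port number at the other endpoint of the
corresponding edge together with the subview at depth `ℓ`. -/
inductive AugView : Type
  | leaf (deg : ℕ) : AugView
  | node (children : List (ℕ × AugView)) : AugView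

/-- The augmented truncated view `B^ℓ(v)` of node `v` at depth `ℓ`. -/
noncomputable def augView (PG : PortGraph) : ℕ → Fin PG.n → AugView
  | 0, v => AugView.leaf (PG.degree v)
  | (ℓ + 1), v => AugView.node ((List.range (PG.degree v)).map
      fun p => (PG.portNum (PG.nbr v p) v, PG.augView ℓ (PG.nbr v p)))

/-- `IsPath PG v s vs` means: the sequence `s = (p₁, q₁, …, p_k, q_k)` of port numbers codes
a path in `PG` starting at `v` whose i-th edge carries port `p_i` at the endpoint closer to
`v` and `q_i` at the other endpoint, and `vs` is the list of visited vertices (from `v` on). -/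
inductive IsPath (PG : PortGraph) : Fin PG.n → List ℕ → List (Fin PG.n) → Prop
  | nil (v : Fin PG.n) : IsPath PG v [] [v]
  | cons (v u : Fin PG.n) (p q : ℕ) (rest : List ℕ) (vs : List (Fin PG.n))
      (hadj : PG.G.Adj v u) (hp : PG.portNum v u = p) (hq : PG.portNum u v = q)
      (htail : IsPath PG u rest vs) : IsPath PG v (p :: q :: rest) (v :: vs)

/-- `P` is a leader election output for `PG`: every node `v` outputs a sequence of port
numbers coding a simple path starting at `v`, and all these paths end at a common node. -/
def IsLeaderElection (PG : PortGraph) (P : Fin PG.n → List ℕ) : Prop :=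
  ∃ leader : Fin PG.n, ∀ v : Fin PG.n, ∃ vs : List (Fin PG.n),
    PG.IsPath v (P v) vs ∧ vs.Nodup ∧ vs.getLast? = some leader

/-- A graph is feasible if at some depth all augmented truncated views are pairwise distinct. -/
def Feasible (PG : PortGraph) : Prop :=
  ∃ ℓ : ℕ, Function.Injective (PG.augView ℓ)

/-- The election index: the smallest depth at which all augmented truncated views are distinct. -/
noncomputable def electionIndex (PG : PortGraph) : ℕ :=
  sInf {ℓ : ℕ | Function.Injective (PG.augView ℓ)}

/-- The diameter: the maximum distance between two nodes. -/
noncomputable def diam (PG : PortGraph) : ℕ :=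
  sSup (Set.range fun p : Fin PG.n × Fin PG.n => PG.G.dist p.1 p.2)

end PortGraph

/-- Consecutive values from `2` on square each other, so the least one above `φ ≥ 2` is at
most `φ ^ 2`. -/
def towerDepth : ℕ → ℕ
  | 0 => 0
  | 1 => 1
  | m + 2 => 2 ^ 2 ^ m

lemma exists_le_towerDepth (φ : ℕ) : ∃ a, φ ≤ towerDepth a :=
  ⟨φ + 2, Nat.lt_two_pow_self.le.trans (Nat.pow_le_pow_right two_pos Nat.lt_two_pow_self.le)⟩

noncomputable def depthCode (φ : ℕ) : ℕ := Nat.find (exists_le_towerDepth φ)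

lemma le_towerDepth_depthCode (φ : ℕ) : φ ≤ towerDepth (depthCode φ) :=
  Nat.find_spec (exists_le_towerDepth φ)

lemma towerDepth_lt_of_lt_depthCode {φ a : ℕ} (ha : a < depthCode φ) : towerDepth a < φ :=
  not_le.1 (Nat.find_min (exists_le_towerDepth φ) ha)

lemma towerDepth_depthCode_le_pow (φ : ℕ) {c : ℕ} (hc : 2 ≤ c) :
    towerDepth (depthCode φ) ≤ φ ^ c := by
  rcases h : depthCode φ with _ | _ | _ | m
  · exact Nat.zero_le _
  · have : 0 < φ := towerDepth_lt_of_lt_depthCode (a := 0) (by omega)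
    exact Nat.one_le_pow _ _ this
  · have : 1 < φ := towerDepth_lt_of_lt_depthCode (a := 1) (by omega)
    exact this.trans_le (Nat.le_self_pow (by omega) φ)
  · have : 2 ^ 2 ^ m < φ := towerDepth_lt_of_lt_depthCode (a := m + 2) (by omega)
    calc 2 ^ 2 ^ (m + 1) = (2 ^ 2 ^ m) ^ 2 := by rw [pow_succ, pow_mul]
      _ ≤ φ ^ 2 := Nat.pow_le_pow_left this.le 2
      _ ≤ φ ^ c := Nat.pow_le_pow_right (Nat.zero_lt_of_lt this) hc

lemma natCast_lt_logb_two {k : ℕ} {x : ℝ} (h : (2 : ℝ) ^ k < x) :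
    (k : ℝ) < Real.logb 2 x := by
  have hx : 0 < x := lt_trans (by positivity) h
  rwa [Real.lt_logb_iff_rpow_lt one_lt_two hx, Real.rpow_natCast]

lemma logb_two_natCast_nonneg (n : ℕ) : 0 ≤ Real.logb 2 (n : ℝ) := by
  rcases n.eq_zero_or_pos with rfl | hn
  · simp
  · exact Real.logb_nonneg one_lt_two (by exact_mod_cast hn)

lemma depthCode_le (φ : ℕ) :
    (depthCode φ : ℝ) ≤ 3 + Real.logb 2 (1 + Real.logb 2 φ) := by
  have hY : 0 ≤ Real.logb 2 (1 + Real.logb 2 φ) :=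
    Real.logb_nonneg one_lt_two (by linarith [logb_two_natCast_nonneg φ])
  rcases Nat.lt_or_ge (depthCode φ) 3 with h | h
  · have : (depthCode φ : ℝ) ≤ 2 := by exact_mod_cast Nat.le_of_lt_succ h
    linarith
  · obtain ⟨m, h⟩ : ∃ m, depthCode φ = m + 3 := ⟨depthCode φ - 3, by omega⟩
    have hφ : 2 ^ 2 ^ m < φ := towerDepth_lt_of_lt_depthCode (a := m + 2) (by omega)
    have h1 : (2 : ℝ) ^ m < Real.logb 2 φ := by
      exact_mod_cast natCast_lt_logb_two (k := 2 ^ m) (by exact_mod_cast hφ)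
    have h2 : (m : ℝ) < Real.logb 2 (1 + Real.logb 2 φ) := natCast_lt_logb_two (by linarith)
    rw [h]
    push_cast
    linarith

lemma length_bits_le (n : ℕ) : (n.bits.length : ℝ) ≤ 1 + Real.logb 2 n := by
  have hsize : n.size ≤ Nat.log 2 n + 1 := Nat.size_le.2 (Nat.lt_pow_succ_log_self one_lt_two n)
  have hlog := Real.natLog_le_logb n 2
  rw [Nat.size_eq_bits_len]
  push_cast at hlog
  have : (n.size : ℝ) ≤ Nat.log 2 n + 1 := by exact_mod_cast hsize
  linarith

lemma length_bits_depthCode_le (φ : ℕ) :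
    ((depthCode φ).bits.length : ℝ) ≤
      3 * (1 + Real.logb 2 (1 + Real.logb 2 (1 + Real.logb 2 φ))) := by
  set Y := Real.logb 2 (1 + Real.logb 2 φ)
  have hY : 0 ≤ Y := Real.logb_nonneg one_lt_two (by linarith [logb_two_natCast_nonneg φ])
  have hZ : 0 ≤ Real.logb 2 (1 + Y) := Real.logb_nonneg one_lt_two (by linarith)
  rcases (depthCode φ).eq_zero_or_pos with h | h
  · simp only [h, Nat.zero_bits, List.length_nil, Nat.cast_zero]
    linarith
  have hlog : Real.logb 2 (depthCode φ) ≤ 2 + Real.logb 2 (1 + Y) :=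
    calc Real.logb 2 (depthCode φ) ≤ Real.logb 2 (4 * (1 + Y)) :=
          Real.logb_le_logb_of_le one_lt_two (by exact_mod_cast h) (by linarith [depthCode_le φ])
      _ = 2 + Real.logb 2 (1 + Y) := by
          rw [Real.logb_mul (by norm_num) (by linarith), show (4 : ℝ) = 2 ^ 2 by norm_num,
            Real.logb_pow, Real.logb_self_eq_one one_lt_two]
          ring
  linarith [length_bits_le (depthCode φ)]

lemma bits_injective : Function.Injective Nat.bits := fun m n h =>
  Nat.eq_of_testBit_eq fun i => by rw [Nat.testBit_eq_inth, Nat.testBit_eq_inth, h]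

noncomputable def shortest {β : Type*} (R : Set (List β)) : List β :=
  Classical.epsilon fun s => s ∈ R ∧ ∀ s' ∈ R, s.length ≤ s'.length

lemma shortest_spec {β : Type*} {R : Set (List β)} (h : R.Nonempty) :
    shortest R ∈ R ∧ ∀ s' ∈ R, (shortest R).length ≤ s'.length := by
  obtain ⟨s, hs, hmin⟩ := (measure (@List.length β)).wf.has_min R h
  exact Classical.epsilon_spec (p := fun s => s ∈ R ∧ ∀ s' ∈ R, s.length ≤ s'.length)
    ⟨s, hs, fun s' hs' => not_lt.1 (hmin s' hs')⟩

namespace PortGraph.AugView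

instance : Nonempty AugView := ⟨leaf 0⟩

def children : AugView → List (ℕ × AugView)
  | leaf _ => []
  | node cs => cs

def rootDegree : AugView → ℕ
  | leaf d => d
  | node cs => cs.length

def trunc : ℕ → AugView → AugView
  | 0, t => leaf t.rootDegree
  | _ + 1, leaf d => leaf d
  | k + 1, node cs => node (cs.map fun c => (c.1, trunc k c.2))

/-- On views of port graphs, whose nodes all have positive degree, this is the depth. -/
def height : AugView → ℕ
  | node ((_, t) :: _) => t.height + 1
  | _ => 0

def child (t : AugView) (p q : ℕ) : Option AugView :=
  match t.children[p]? with
  | some (q', t') => if q' = q then some t' else none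
  | none => none

def follow (t : AugView) : List ℕ → Option AugView
  | [] => some t
  | p :: q :: s => (t.child p q).bind (·.follow s)
  | [_] => none

/-- The condition `α ≤ x.height` keeps out subviews too close to the leaves, whose
`α`-truncations are not `α`-views of nodes. -/
def routes (α : ℕ) (t y : AugView) : Set (List ℕ) :=
  {s | ∃ x, t.follow s = some x ∧ α ≤ x.height ∧ x.trunc α = y}

def seenViews (α : ℕ) (t : AugView) : Set AugView :=
  {y | (t.routes α y).Nonempty}

noncomputable def leaderView (α : ℕ) (t : AugView) : AugView :=
  Classical.epsilon (· ∈ t.seenViews α)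

noncomputable def electionOutput (α : ℕ) (t : AugView) : List ℕ :=
  shortest (t.routes α (t.leaderView α))

end PortGraph.AugView

namespace PortGraph

open AugView SimpleGraph

variable (PG : PortGraph)

lemma exists_adj (v : Fin PG.n) : ∃ u, PG.G.Adj v u := by
  have : 1 < Fintype.card (Fin PG.n) := by simpa using lt_of_lt_of_le (by norm_num) PG.three_le
  obtain ⟨w, hw⟩ := Fintype.exists_ne_of_one_lt_card this v
  obtain ⟨p⟩ := PG.conn.preconnected v w
  cases p with
  | nil => exact absurd rfl hw
  | cons h _ => exact ⟨_, h⟩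

lemma degree_pos (v : Fin PG.n) : 0 < PG.degree v := by
  obtain ⟨u, hu⟩ := PG.exists_adj v
  have : Nonempty {w : Fin PG.n // PG.G.Adj v w} := ⟨⟨u, hu⟩⟩
  exact Nat.card_pos

/-- Ports at `v` are injective and bounded by the degree, hence onto `{0, …, degree v - 1}`. -/
lemma exists_adj_portNum_eq {v : Fin PG.n} {p : ℕ} (hp : p < PG.degree v) :
    ∃ u, PG.G.Adj v u ∧ PG.portNum v u = p := by
  let F : {w : Fin PG.n // PG.G.Adj v w} → Fin (PG.degree v) :=
    fun w => ⟨PG.portNum v w, PG.port_lt v w w.2⟩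
  have hinj : Function.Injective F := fun a b hab =>
    Subtype.ext (PG.port_inj v a b a.2 b.2 (congrArg Fin.val hab))
  have hbij : Function.Bijective F :=
    (Nat.bijective_iff_injective_and_card F).2 ⟨hinj, by simp [degree]⟩
  obtain ⟨u, hu⟩ := hbij.2 ⟨p, hp⟩
  exact ⟨u.1, u.2, congrArg Fin.val hu⟩

lemma adj_nbr_and_portNum_nbr {v : Fin PG.n} {p : ℕ} (hp : p < PG.degree v) :
    PG.G.Adj v (PG.nbr v p) ∧ PG.portNum v (PG.nbr v p) = p := by
  have h := PG.exists_adj_portNum_eq hp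
  rw [nbr, dif_pos h]
  exact h.choose_spec

lemma nbr_portNum {v u : Fin PG.n} (h : PG.G.Adj v u) : PG.nbr v (PG.portNum v u) = u :=
  have hp := PG.adj_nbr_and_portNum_nbr (PG.port_lt v u h)
  PG.port_inj v _ u hp.1 h hp.2

lemma children_augView_succ (ℓ : ℕ) (v : Fin PG.n) :
    (PG.augView (ℓ + 1) v).children = (List.range (PG.degree v)).map
      fun p => (PG.portNum (PG.nbr v p) v, PG.augView ℓ (PG.nbr v p)) := rfl

lemma rootDegree_augView (ℓ : ℕ) (v : Fin PG.n) :
    (PG.augView ℓ v).rootDegree = PG.degree v := by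
  cases ℓ <;> simp [augView, rootDegree]

lemma trunc_augView {k ℓ : ℕ} (h : k ≤ ℓ) (v : Fin PG.n) :
    (PG.augView ℓ v).trunc k = PG.augView k v := by
  induction k generalizing ℓ v with
  | zero => simp only [trunc, rootDegree_augView, augView]
  | succ k ih =>
    obtain ⟨m, rfl⟩ : ∃ m, ℓ = m + 1 := ⟨ℓ - 1, by omega⟩
    simp only [augView, trunc, List.map_map]
    congr 1
    exact List.map_congr_left fun p _ => by simp [ih (Nat.le_of_succ_le_succ h)]

lemma height_augView (ℓ : ℕ) (v : Fin PG.n) : (PG.augView ℓ v).height = ℓ := by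
  induction ℓ generalizing v with
  | zero => simp [augView, height]
  | succ m ih =>
    have := PG.degree_pos v
    obtain ⟨d, hd⟩ : ∃ d, PG.degree v = d + 1 := ⟨PG.degree v - 1, by omega⟩
    rw [augView, hd, List.range_succ_eq_map, List.map_cons, height, ih]

lemma child_augView_succ_eq_some_iff {ℓ : ℕ} {v : Fin PG.n} {p q : ℕ} {x : AugView} :
    (PG.augView (ℓ + 1) v).child p q = some x ↔
      ∃ u, PG.G.Adj v u ∧ PG.portNum v u = p ∧ PG.portNum u v = q ∧
        PG.augView ℓ u = x := by
  rw [child, children_augView_succ, List.getElem?_map]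
  by_cases hp : p < PG.degree v
  · obtain ⟨hadj, hport⟩ := PG.adj_nbr_and_portNum_nbr hp
    rw [List.getElem?_range hp, Option.map_some]
    dsimp only
    constructor
    · intro h
      split_ifs at h with hq
      exact ⟨_, hadj, hport, hq, Option.some_inj.1 h⟩
    · rintro ⟨u, hu, rfl, rfl, rfl⟩
      simp [PG.nbr_portNum hu]
  · rw [List.getElem?_eq_none (by simpa using hp), Option.map_none]
    simp only [reduceCtorEq, false_iff]
    rintro ⟨u, hu, rfl, -⟩
    exact hp (PG.port_lt v u hu)

lemma injective_augView_of_le {k ℓ : ℕ} (hle : k ≤ ℓ)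
    (h : Function.Injective (PG.augView k)) :
    Function.Injective (PG.augView ℓ) := fun u w huw => h <| by
  rw [← PG.trunc_augView hle u, ← PG.trunc_augView hle w, huw]

def portSeq (PG : PortGraph) : {v u : Fin PG.n} → PG.G.Walk v u → List ℕ
  | _, _, .nil => []
  | v, _, .cons (v := w) _ p => PG.portNum v w :: PG.portNum w v :: portSeq PG p

lemma length_portSeq {v u : Fin PG.n} (p : PG.G.Walk v u) :
    (PG.portSeq p).length = 2 * p.length := by
  induction p with
  | nil => rfl
  | cons _ p ih => simp only [portSeq, List.length_cons, ih, Walk.length_cons]; ring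

lemma isPath_portSeq {v u : Fin PG.n} (p : PG.G.Walk v u) :
    PG.IsPath v (PG.portSeq p) p.support := by
  induction p with
  | nil => exact .nil _
  | cons h p ih => exact .cons _ _ _ _ _ _ h rfl rfl ih

lemma follow_augView_portSeq {v u : Fin PG.n} (p : PG.G.Walk v u) {ℓ : ℕ}
    (h : p.length ≤ ℓ) :
    (PG.augView ℓ v).follow (PG.portSeq p) = some (PG.augView (ℓ - p.length) u) := by
  induction p generalizing ℓ with
  | nil => rfl
  | @cons v w u hadj p ih =>
    rw [Walk.length_cons] at h
    obtain ⟨m, rfl⟩ : ∃ m, ℓ = m + 1 := ⟨ℓ - 1, by omega⟩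
    have hchild : (PG.augView (m + 1) v).child (PG.portNum v w) (PG.portNum w v) =
        some (PG.augView m w) := PG.child_augView_succ_eq_some_iff.2 ⟨w, hadj, rfl, rfl, rfl⟩
    rw [Walk.length_cons, portSeq, follow, hchild, Option.bind_some, ih (by omega),
      Nat.add_sub_add_right]

lemma exists_walk_of_follow_augView :
    ∀ {ℓ : ℕ} {v : Fin PG.n} {s : List ℕ} {x : AugView},
      (PG.augView ℓ v).follow s = some x →
      ∃ u, ∃ p : PG.G.Walk v u,
        PG.portSeq p = s ∧ p.length ≤ ℓ ∧ x = PG.augView (ℓ - p.length) u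
  | _, v, [], _, h => ⟨v, .nil, rfl, Nat.zero_le _, (Option.some_inj.1 h).symm⟩
  | _, _, [_], _, h => nomatch h
  | 0, _, _ :: _ :: _, _, h => nomatch h
  | _ + 1, _, _ :: _ :: _, _, h => by
    obtain ⟨y, hy, hs⟩ := Option.bind_eq_some_iff.1 h
    obtain ⟨u, hadj, rfl, rfl, rfl⟩ := PG.child_augView_succ_eq_some_iff.1 hy
    obtain ⟨w, p, rfl, hp, rfl⟩ := exists_walk_of_follow_augView hs
    exact ⟨w, .cons hadj p, rfl, by simpa using hp, by simp⟩

lemma dist_le_diam (u w : Fin PG.n) : PG.G.dist u w ≤ PG.diam :=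
  le_csSup (Set.finite_range _).bddAbove ⟨(u, w), rfl⟩

lemma mem_routes_augView_iff {α ℓ : ℕ} {v : Fin PG.n} {y : AugView} {s : List ℕ} :
    s ∈ (PG.augView ℓ v).routes α y ↔
      ∃ u, ∃ p : PG.G.Walk v u,
        PG.portSeq p = s ∧ p.length + α ≤ ℓ ∧ PG.augView α u = y := by
  constructor
  · rintro ⟨x, hx, hα, rfl⟩
    obtain ⟨u, p, rfl, hp, rfl⟩ := PG.exists_walk_of_follow_augView hx
    rw [height_augView] at hα
    exact ⟨u, p, rfl, by omega, (PG.trunc_augView hα u).symm⟩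
  · rintro ⟨u, p, rfl, hp, rfl⟩
    exact ⟨_, PG.follow_augView_portSeq p (by omega), by rw [height_augView]; omega,
      PG.trunc_augView (by omega) u⟩

lemma seenViews_augView {α ℓ : ℕ} (h : PG.diam + α ≤ ℓ) (v : Fin PG.n) :
    (PG.augView ℓ v).seenViews α = Set.range (PG.augView α) := by
  ext y
  constructor
  · rintro ⟨s, hs⟩
    obtain ⟨u, -, -, -, rfl⟩ := PG.mem_routes_augView_iff.1 hs
    exact ⟨u, rfl⟩
  · rintro ⟨u, rfl⟩
    obtain ⟨p, hp⟩ := PG.conn.exists_walk_length_eq_dist v u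
    have := PG.dist_le_diam v u
    exact ⟨_, PG.mem_routes_augView_iff.2 ⟨u, p, rfl, by omega, rfl⟩⟩

lemma exists_forall_leaderView_augView_eq {α ℓ : ℕ} (h : PG.diam + α ≤ ℓ) :
    ∃ leader, ∀ v, (PG.augView ℓ v).leaderView α = PG.augView α leader := by
  obtain ⟨leader, hleader⟩ := Classical.epsilon_spec (p := (· ∈ Set.range (PG.augView α)))
    ⟨_, Set.mem_range_self (⟨0, by have := PG.three_le; omega⟩ : Fin PG.n)⟩
  exact ⟨leader, fun v => by rw [leaderView, PG.seenViews_augView h, hleader]⟩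

lemma exists_walk_portSeq_eq_shortest {α ℓ : ℕ} (hinj : Function.Injective (PG.augView α))
    (h : PG.diam + α ≤ ℓ) (v u : Fin PG.n) :
    ∃ p : PG.G.Walk v u,
      PG.portSeq p = shortest ((PG.augView ℓ v).routes α (PG.augView α u)) ∧
        p.length = PG.G.dist v u := by
  obtain ⟨q, hq⟩ := PG.conn.exists_walk_length_eq_dist v u
  have hqR : PG.portSeq q ∈ (PG.augView ℓ v).routes α (PG.augView α u) := by
    have := PG.dist_le_diam v u
    exact PG.mem_routes_augView_iff.2 ⟨u, q, rfl, by omega, rfl⟩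
  obtain ⟨hmem, hmin⟩ := shortest_spec ⟨_, hqR⟩
  obtain ⟨w, p, hps, -, hw⟩ := PG.mem_routes_augView_iff.1 hmem
  obtain rfl : w = u := hinj hw
  have hshorter := hmin _ hqR
  rw [← hps, length_portSeq, length_portSeq] at hshorter
  exact ⟨p, hps, le_antisymm (by omega) (dist_le p)⟩

theorem isLeaderElection_electionOutput {α ℓ : ℕ} (hinj : Function.Injective (PG.augView α))
    (h : PG.diam + α ≤ ℓ) :
    PG.IsLeaderElection fun v => (PG.augView ℓ v).electionOutput α := by
  obtain ⟨leader, hleader⟩ := PG.exists_forall_leaderView_augView_eq h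
  refine ⟨leader, fun v => ?_⟩
  obtain ⟨p, hps, hlen⟩ := PG.exists_walk_portSeq_eq_shortest hinj h v leader
  refine ⟨p.support, ?_, (p.isPath_of_length_eq_dist hlen).support_nodup, ?_⟩
  · show PG.IsPath v ((PG.augView ℓ v).electionOutput α) p.support
    rw [electionOutput, hleader, ← hps]
    exact PG.isPath_portSeq p
  · rw [List.getLast?_eq_some_getLast (by simp), Walk.getLast_support]

end PortGraph

/-- Leader election in time at most `D + φ^c` can be achieved with `O(log log log φ)`
bits of advice. -/
theorem advice_upper_bound_time_D_add_phi_pow_c (c : ℕ) (hc : 1 < c) :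
    ∃ (C : ℝ) (A : PortGraph → List Bool)
      (f : List Bool → PortGraph.AugView → List ℕ), 0 < C ∧
      ∀ PG : PortGraph, PG.Feasible →
        (((A PG).length : ℝ) ≤
          C * (1 + Real.logb 2 (1 + Real.logb 2 (1 + Real.logb 2 (PG.electionIndex : ℝ))))) ∧
        PG.IsLeaderElection
          (fun v => f (A PG) (PG.augView (PG.diam + PG.electionIndex ^ c) v)) := by
  refine ⟨3, fun PG => (depthCode PG.electionIndex).bits,
    fun adv t => t.electionOutput (towerDepth (Function.invFun Nat.bits adv)), by norm_num,
    fun PG hF => ⟨length_bits_depthCode_le _, ?_⟩⟩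
  set φ := PG.electionIndex
  beta_reduce
  rw [Function.leftInverse_invFun bits_injective (depthCode φ)]
  refine PG.isLeaderElection_electionOutput ?_ ?_
  · exact PG.injective_augView_of_le (le_towerDepth_depthCode φ) (Nat.sInf_mem hF)
  · have := towerDepth_depthCode_le_pow φ hc
    omega

end Election
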